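/- For every topological space X, |X| ≤ nu(X)^{κ(X)·aL(X)}. -/

import Mathlib

open Set Topology Cardinal

universe u

variable {X : Type u}

/-- The θ-closure of a set. -/
def thetaCl [TopologicalSpace X] (A : Set X) : Set X :=
  {x | ∀ U : Set X, IsOpen U → x ∈ U → (closure U ∩ A).Nonempty}

/-- The θ-closed hull of a set. -/
def thetaHull [TopologicalSpace X] (A : Set X) : Set X :=
  ⋂₀ {C : Set X | thetaCl C = C ∧ A ⊆ C}

/-- A nonempty set is finitely non-Urysohn if every finite choice of closed
neighborhoods (closures of open neighborhoods) of finitely many of its points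
has nonempty intersection. -/
def FinNonUrysohn [TopologicalSpace X] (A : Set X) : Prop :=
  A.Nonempty ∧ ∀ F : Set X, F ⊆ A → F.Nonempty → F.Finite →
    ∀ U : X → Set X, (∀ x ∈ F, IsOpen (U x) ∧ x ∈ U x) →
      (⋂ x ∈ F, closure (U x)).Nonempty

/-- The non-Urysohn number `nu(X)`. -/
noncomputable def nuNumber (X : Type u) [TopologicalSpace X] : Cardinal.{u} :=
  1 + ⨆ A : {A : Set X // FinNonUrysohn A}, #↥A.1

/-- The Urysohn number `U(X)`. -/
noncomputable def UrysohnNumber (X : Type u) [TopologicalSpace X] : Cardinal.{u} :=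
  sInf {κ : Cardinal.{u} | ∀ A : Set X, κ ≤ #↥A → ∃ U : X → Set X,
    (∀ a ∈ A, IsOpen (U a) ∧ a ∈ U a) ∧ (⋂ a ∈ A, closure (U a)) = ∅}

/-- The cardinal function `κ(X)`: the smallest infinite cardinal such that each
point has a family of at most that many closed neighborhoods cofinal (under
reverse inclusion) in the closures of its open neighborhoods. -/
noncomputable def kappaInv (X : Type u) [TopologicalSpace X] : Cardinal.{u} :=
  sInf {κ : Cardinal.{u} | ℵ₀ ≤ κ ∧ ∀ x : X, ∃ V : Set (Set X), #↥V ≤ κ ∧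
    (∀ W ∈ V, IsClosed W ∧ W ∈ nhds x) ∧
    ∀ U : Set X, IsOpen U → x ∈ U → ∃ W ∈ V, W ⊆ closure U}

/-- The character `χ(X)`. -/
noncomputable def chiChar (X : Type u) [TopologicalSpace X] : Cardinal.{u} :=
  sInf {κ : Cardinal.{u} | ℵ₀ ≤ κ ∧ ∀ x : X, ∃ B : Set (Set X), #↥B ≤ κ ∧
    (∀ U ∈ B, U ∈ nhds x) ∧ ∀ S ∈ nhds x, ∃ U ∈ B, U ⊆ S}

/-- The θ-density `d_θ(X)`. -/
noncomputable def dTheta (X : Type u) [TopologicalSpace X] : Cardinal.{u} :=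
  sInf {c : Cardinal.{u} | ∃ A : Set X, thetaCl A = Set.univ ∧ #↥A = c}

/-- The cardinal function `sL_θ(X)`. -/
noncomputable def sLtheta (X : Type u) [TopologicalSpace X] : Cardinal.{u} :=
  sInf {τ : Cardinal.{u} | ℵ₀ ≤ τ ∧ ∀ A : Set X, ∀ 𝒰 : Set (Set X),
    (∀ U ∈ 𝒰, IsOpen U) → thetaCl A ⊆ ⋃₀ 𝒰 →
    ∃ 𝒱 ⊆ 𝒰, #↥𝒱 ≤ τ ∧ A ⊆ closure (⋃₀ 𝒱)}

/-- The cardinal function `wL_c(X)`. -/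
noncomputable def wLc (X : Type u) [TopologicalSpace X] : Cardinal.{u} :=
  sInf {τ : Cardinal.{u} | ℵ₀ ≤ τ ∧ ∀ A : Set X, IsClosed A → ∀ 𝒰 : Set (Set X),
    (∀ U ∈ 𝒰, IsOpen U) → A ⊆ ⋃₀ 𝒰 →
    ∃ 𝒱 ⊆ 𝒰, #↥𝒱 ≤ τ ∧ A ⊆ closure (⋃₀ 𝒱)}

/-- The almost Lindelöf degree `aL(X)`. -/
noncomputable def aLdeg (X : Type u) [TopologicalSpace X] : Cardinal.{u} :=
  sInf {τ : Cardinal.{u} | ℵ₀ ≤ τ ∧ ∀ 𝒰 : Set (Set X),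
    (∀ U ∈ 𝒰, IsOpen U) → ⋃₀ 𝒰 = Set.univ →
    ∃ 𝒱 ⊆ 𝒰, #↥𝒱 ≤ τ ∧ (⋃ V ∈ 𝒱, closure V) = Set.univ}

/-- `X` is a Urysohn space: distinct points have open neighborhoods with
disjoint closures. -/
def UrysohnSpace (X : Type u) [TopologicalSpace X] : Prop :=
  ∀ x y : X, x ≠ y → ∃ U V : Set X, IsOpen U ∧ IsOpen V ∧ x ∈ U ∧ y ∈ V ∧
    closure U ∩ closure V = ∅

/-- For a set `S`, the intersection over all choices of closed neighborhoods of
the points of `S` of the θ-closures of the intersections of the choices. -/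
def capSet [TopologicalSpace X] (S : Set X) : Set X :=
  {y | ∀ U : X → Set X, (∀ a ∈ S, IsOpen (U a) ∧ a ∈ U a) →
    y ∈ thetaCl (⋂ a ∈ S, closure (U a))}

/-- For a set `M`, the intersection over all nonempty finite `F ⊆ M` and all
choices of open neighborhoods of points of `F` of
`cl_θ(⋂_{x∈F} closure (U x))`. -/
def fnuCap [TopologicalSpace X] (M : Set X) : Set X :=
  {y | ∀ F : Set X, F ⊆ M → F.Nonempty → F.Finite → ∀ U : X → Set X,
    (∀ x ∈ F, IsOpen (U x) ∧ x ∈ U x) →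
    y ∈ thetaCl (⋂ x ∈ F, closure (U x))}


/-!
Put `κ = κ(X)·aL(X)` and `μ = nu(X)^κ`.

Fix for every point a family of `κ(X)` closed neighbourhoods cofinal among the closures of its
open neighbourhoods. A point `z ∈ cl_θ S` is coded by choosing, for each finite subfamily at `z`,
a point of `S` in its intersection; points with the same code form a finitely non-Urysohn set,
so `|cl_θ S| ≤ |S|^κ(X) · nu(X)`.

A closing-off argument of length `κ⁺` gives a set `H` with `|H| ≤ μ` which contains `cl_θ S` for
every `S ⊆ H` with `|S| ≤ κ` (so `H` is θ-closed) and, for every choice of closed neighbourhoods of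
at most `κ` points of `H`, a point outside their union whenever there is one. If `q ∉ H`, each
point of `H` has a closed neighbourhood missing `q`; almost Lindelöfness yields `aL(X)` of them
covering `H`, and the point of `H` outside their union is a contradiction. Hence `H = X`.
-/

namespace Cardinal

lemma mk_iUnion_le_of_le {α ι : Type u} {f : ι → Set α} {μ : Cardinal.{u}} (hμ : ℵ₀ ≤ μ)
    (hι : #ι ≤ μ) (hf : ∀ i, #(f i) ≤ μ) : #(⋃ i, f i) ≤ μ :=
  (mk_iUnion_le f).trans <| (mul_le_mul' hι (ciSup_le' hf)).trans (mul_eq_self hμ).le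

lemma power_le_power_self_of_le {a b κ : Cardinal} (ha : a ≤ κ) (hb : b ≤ κ) (hκ : κ ≠ 0) :
    a ^ b ≤ κ ^ κ :=
  (power_le_power_right ha).trans (power_le_power_left hκ hb)

lemma power_power_self_of_aleph0_le {n κ : Cardinal} (hκ : ℵ₀ ≤ κ) : (n ^ κ) ^ κ = n ^ κ := by
  rw [← power_mul, mul_eq_self hκ]

end Cardinal

section ClosingOff

variable {α : Type u} (Ψ : Set α → Set α) (κ : Cardinal.{u})

noncomputable def closingOffStage : Ordinal.{u} → Set α :=
  WellFoundedLT.fix fun j stage =>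
    ⋃ S : {S : Set α // S ⊆ (⋃ i, ⋃ h : i < j, stage i h) ∧ #S ≤ κ}, Ψ S

lemma closingOffStage_eq (j : Ordinal.{u}) :
    closingOffStage Ψ κ j =
      ⋃ S : {S : Set α // S ⊆ (⋃ i < j, closingOffStage Ψ κ i) ∧ #S ≤ κ}, Ψ S :=
  WellFoundedLT.fix_eq _ j

variable {Ψ κ}

lemma card_closingOffStage_le {μ : Cardinal.{u}} (hμ : ℵ₀ ≤ μ) (hμκ : μ ^ κ ≤ μ)
    (hΨ : ∀ S : Set α, #S ≤ κ → #(Ψ S) ≤ μ) {j : Ordinal.{u}} (hj : j.card ≤ μ) :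
    #(closingOffStage Ψ κ j) ≤ μ := by
  induction j using WellFoundedLT.induction with
  | _ j ih =>
    have hprev : #(⋃ i < j, closingOffStage Ψ κ i) ≤ μ :=
      mk_biUnion_le_of_le hj hμ _ fun i hi =>
        ih i hi ((Ordinal.card_le_card hi.le).trans hj)
    rw [closingOffStage_eq]
    refine mk_iUnion_le_of_le hμ ?_ fun S => hΨ S S.2.2
    calc _ ≤ max #(⋃ i < j, closingOffStage Ψ κ i) ℵ₀ ^ κ := mk_bounded_subset_le _ _
      _ ≤ μ ^ κ := power_le_power_right (max_le hprev hμ)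
      _ ≤ μ := hμκ

/-- The stages are indexed by the ordinals below `κ⁺`; regularity of `κ⁺` makes every subset of
size `κ` of their union appear at some stage. -/
theorem exists_card_le_forall_subset_card_le_subset {μ : Cardinal.{u}} (hκ : ℵ₀ ≤ κ)
    (hμ : ℵ₀ ≤ μ) (hμκ : μ ^ κ ≤ μ) (hΨ : ∀ S : Set α, #S ≤ κ → #(Ψ S) ≤ μ) :
    ∃ H : Set α, #H ≤ μ ∧ ∀ S ⊆ H, #S ≤ κ → Ψ S ⊆ H := by
  set o := (Order.succ κ).ord
  have hoμ : o.card ≤ μ := by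
    rw [card_ord]
    exact Order.succ_le_of_lt <| (cantor κ).trans_le <|
      (power_le_power_right ((natCast_lt_aleph0 (n := 2)).le.trans hμ)).trans hμκ
  refine ⟨⋃ j < o, closingOffStage Ψ κ j, mk_biUnion_le_of_le hoμ hμ _ fun j hj =>
    card_closingOffStage_le hμ hμκ hΨ ((Ordinal.card_le_card hj.le).trans hoμ), ?_⟩
  intro S hS hSκ
  choose j hjo hSj using fun x : S => mem_iUnion₂.1 (hS x.2)
  have hsup : (⨆ x, j x) < o :=
    Ordinal.iSup_lt_of_lt_cof ((isRegular_succ hκ).cof_ord ▸ hSκ.trans_lt (Order.lt_succ κ)) hjo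
  have hsucc : Order.succ (⨆ x, j x) < o :=
    (isSuccLimit_ord (hκ.trans (Order.le_succ κ))).succ_lt hsup
  refine Subset.trans ?_ (subset_biUnion_of_mem (u := closingOffStage Ψ κ) hsucc)
  rw [closingOffStage_eq]
  refine subset_iUnion_of_subset ⟨S, fun x hx => ?_, hSκ⟩ subset_rfl
  exact mem_biUnion (Order.lt_succ_of_le (Ordinal.le_iSup j ⟨x, hx⟩)) (hSj ⟨x, hx⟩)

end ClosingOff

section ThetaClosure

variable [TopologicalSpace X]

lemma notMem_thetaCl_iff {A : Set X} {x : X} :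
    x ∉ thetaCl A ↔ ∃ U, IsOpen U ∧ x ∈ U ∧ Disjoint (closure U) A := by
  simp only [thetaCl, mem_ofPred_eq, not_forall, not_nonempty_iff_eq_empty,
    disjoint_iff_inter_eq_empty, exists_prop]

lemma inter_nonempty_of_mem_thetaCl {A W : Set X} {x : X} (hx : x ∈ thetaCl A)
    (hW : IsClosed W) (hWx : W ∈ 𝓝 x) : (W ∩ A).Nonempty :=
  (hx _ isOpen_interior (mem_interior_iff_mem_nhds.2 hWx)).mono <|
    inter_subset_inter_left _ (hW.closure_subset_iff.2 interior_subset)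

end ThetaClosure

section Invariants

variable (X) [TopologicalSpace X]

lemma kappaInv_spec : ℵ₀ ≤ kappaInv X ∧ ∀ x : X, ∃ V : Set (Set X), #V ≤ kappaInv X ∧
    (∀ W ∈ V, IsClosed W ∧ W ∈ 𝓝 x) ∧ ∀ U : Set X, IsOpen U → x ∈ U → ∃ W ∈ V, W ⊆ closure U := by
  refine csInf_mem (s := {κ : Cardinal.{u} | ℵ₀ ≤ κ ∧ ∀ x : X, ∃ V : Set (Set X), #V ≤ κ ∧
    (∀ W ∈ V, IsClosed W ∧ W ∈ 𝓝 x) ∧ ∀ U : Set X, IsOpen U → x ∈ U → ∃ W ∈ V, W ⊆ closure U})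
    ⟨max ℵ₀ (2 ^ #X), le_max_left _ _, fun x => ⟨closure '' {U | IsOpen U ∧ x ∈ U},
      mk_image_le.trans <| (mk_set_le _).trans_eq mk_set |>.trans (le_max_right _ _), ?_, ?_⟩⟩
  · rintro _ ⟨U, ⟨hU, hxU⟩, rfl⟩
    exact ⟨isClosed_closure, Filter.mem_of_superset (hU.mem_nhds hxU) subset_closure⟩
  · exact fun U hU hxU => ⟨closure U, mem_image_of_mem _ ⟨hU, hxU⟩, subset_rfl⟩

lemma aLdeg_spec : ℵ₀ ≤ aLdeg X ∧ ∀ 𝒰 : Set (Set X), (∀ U ∈ 𝒰, IsOpen U) → ⋃₀ 𝒰 = Set.univ →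
    ∃ 𝒱 ⊆ 𝒰, #𝒱 ≤ aLdeg X ∧ (⋃ V ∈ 𝒱, closure V) = Set.univ := by
  refine csInf_mem (s := {τ : Cardinal.{u} | ℵ₀ ≤ τ ∧ ∀ 𝒰 : Set (Set X),
    (∀ U ∈ 𝒰, IsOpen U) → ⋃₀ 𝒰 = Set.univ →
    ∃ 𝒱 ⊆ 𝒰, #𝒱 ≤ τ ∧ (⋃ V ∈ 𝒱, closure V) = Set.univ})
    ⟨max ℵ₀ (2 ^ #X), le_max_left _ _, fun 𝒰 _ h𝒰 =>
      ⟨𝒰, subset_rfl, (mk_set_le _).trans_eq mk_set |>.trans (le_max_right _ _), ?_⟩⟩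
  rw [sUnion_eq_biUnion] at h𝒰
  exact eq_univ_of_univ_subset <| h𝒰 ▸ iUnion₂_mono fun U _ => subset_closure

variable {X}

lemma FinNonUrysohn.card_le_nuNumber {A : Set X} (hA : FinNonUrysohn A) : #A ≤ nuNumber X :=
  (le_ciSup bddAbove_of_small (⟨A, hA⟩ : {A : Set X // FinNonUrysohn A})).trans le_add_self

lemma finNonUrysohn_singleton (x : X) : FinNonUrysohn ({x} : Set X) := by
  refine ⟨singleton_nonempty x, fun F hF _ _ U hU => ⟨x, mem_iInter₂.2 fun y hy => ?_⟩⟩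
  obtain rfl : y = x := hF hy
  exact subset_closure (hU y hy).2

lemma two_le_nuNumber [Nonempty X] : 2 ≤ nuNumber X := by
  obtain ⟨x⟩ := ‹Nonempty X›
  have h : (1 : Cardinal) ≤ ⨆ A : {A : Set X // FinNonUrysohn A}, #A.1 := by
    simpa using le_ciSup (f := fun A : {A : Set X // FinNonUrysohn A} => #A.1) bddAbove_of_small
      (⟨{x}, finNonUrysohn_singleton x⟩ : {A : Set X // FinNonUrysohn A})
  rw [nuNumber, ← one_add_one_eq_two]
  exact add_le_add_right h 1

end Invariants

section ClosedNhdsCofinal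

variable [TopologicalSpace X] {ι : Type u}

structure IsClosedNhdsCofinal (e : X → ι → Set X) : Prop where
  isClosed (x : X) (i : ι) : IsClosed (e x i)
  mem_nhds (x : X) (i : ι) : e x i ∈ 𝓝 x
  exists_subset_closure {x : X} {U : Set X} : IsOpen U → x ∈ U → ∃ i, e x i ⊆ closure U

variable (X) in
lemma exists_isClosedNhdsCofinal_kappaInv :
    ∃ e : X → (kappaInv X).out → Set X, IsClosedNhdsCofinal e := by
  choose V hVκ hV hVU using (kappaInv_spec X).2
  have hsurj : ∀ x, ∃ f : (kappaInv X).out → Set X, (∀ i, f i ∈ V x) ∧ V x ⊆ range f := by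
    intro x
    obtain ⟨W, hW, -⟩ := hVU x Set.univ isOpen_univ (mem_univ x)
    have : Nonempty (V x) := ⟨⟨W, hW⟩⟩
    obtain ⟨g⟩ := (le_def _ _).1 ((hVκ x).trans_eq (mk_out _).symm)
    refine ⟨fun i => ((Function.invFun g i : V x) : Set X), fun i => (Function.invFun g i).2,
      fun W hW => ?_⟩
    exact ⟨g ⟨W, hW⟩, congrArg Subtype.val (Function.leftInverse_invFun g.injective _)⟩
  choose e heV hVe using hsurj
  refine ⟨e, fun x i => (hV x _ (heV x i)).1, fun x i => (hV x _ (heV x i)).2, ?_⟩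
  intro x U hU hxU
  obtain ⟨W, hW, hWU⟩ := hVU x U hU hxU
  obtain ⟨i, rfl⟩ := hVe x hW
  exact ⟨i, hWU⟩

variable {e : X → ι → Set X}

lemma IsClosedNhdsCofinal.finNonUrysohn [Nonempty ι] (he : IsClosedNhdsCofinal e) {A : Set X}
    (hA : A.Nonempty) (g : Finset ι → X) (hg : ∀ z ∈ A, ∀ F : Finset ι, g F ∈ ⋂ i ∈ F, e z i) :
    FinNonUrysohn A := by
  classical
  refine ⟨hA, fun F hFA _ hF U hU => ?_⟩
  choose! i hi using fun y hy => he.exists_subset_closure (hU y hy).1 (hU y hy).2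
  refine ⟨g (hF.toFinset.image i), mem_iInter₂.2 fun y hy => hi y hy ?_⟩
  exact mem_iInter₂.1 (hg y (hFA hy) _) (i y) (Finset.mem_image_of_mem i (hF.mem_toFinset.2 hy))

lemma IsClosedNhdsCofinal.card_thetaCl_le [Infinite ι] (he : IsClosedNhdsCofinal e)
    (S : Set X) : #(thetaCl S) ≤ #S ^ #ι * nuNumber X := by
  have hcode : ∀ (z : thetaCl S) (F : Finset ι), ∃ s : S, (s : X) ∈ ⋂ i ∈ F, e z i := by
    intro z F
    obtain ⟨s, hsF, hsS⟩ := inter_nonempty_of_mem_thetaCl z.2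
      (isClosed_biInter fun i _ => he.isClosed z i)
      ((Filter.biInter_finset_mem F).2 fun i _ => he.mem_nhds z i)
    exact ⟨⟨s, hsS⟩, hsF⟩
  choose c hc using hcode
  calc #(thetaCl S) ≤ #(Finset ι → S) * nuNumber X := mk_le_mk_mul_of_mk_preimage_le c fun g => ?_
    _ = #S ^ #ι * nuNumber X := by rw [← power_def, mk_finset_of_infinite]
  rw [← mk_image_eq Subtype.val_injective]
  rcases (Subtype.val '' (c ⁻¹' {g})).eq_empty_or_nonempty with h | h
  · simp [h]
  · refine (he.finNonUrysohn h (fun F => g F) ?_).card_le_nuNumber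
    rintro _ ⟨z, rfl : c z = g, rfl⟩ F
    exact hc z F

end ClosedNhdsCofinal

section EscapePoints

variable {ι : Type u}

/-- For each choice of a neighbourhood `e x (w x)` of every `x ∈ S`, a point outside all of them
(an arbitrary point if there is none). -/
noncomputable def escapePoints [Nonempty X] (e : X → ι → Set X) (S : Set X) : Set X :=
  range fun w : S → ι => Classical.epsilon fun p => ∀ x : S, p ∉ e x (w x)

lemma card_escapePoints_le [Nonempty X] (e : X → ι → Set X) (S : Set X) :
    #(escapePoints e S) ≤ #ι ^ #S :=
  mk_range_le.trans_eq (power_def _ _).symm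

end EscapePoints

section Covering

variable [TopologicalSpace X] {ι : Type u} {e : X → ι → Set X}

lemma IsClosedNhdsCofinal.exists_subset_card_le_mem_thetaCl (he : IsClosedNhdsCofinal e)
    {H : Set X} {z : X} (hz : z ∈ thetaCl H) : ∃ S ⊆ H, #S ≤ #ι ∧ z ∈ thetaCl S := by
  choose f hfe hfH using fun i =>
    inter_nonempty_of_mem_thetaCl hz (he.isClosed z i) (he.mem_nhds z i)
  refine ⟨range f, range_subset_iff.2 hfH, mk_range_le, fun U hU hzU => ?_⟩
  obtain ⟨i, hi⟩ := he.exists_subset_closure hU hzU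
  exact ⟨f i, hi (hfe i), mem_range_self i⟩

lemma exists_card_le_aLdeg_forall_mem_closure {U : X → Set X} (hU : ∀ x, IsOpen (U x))
    (hxU : ∀ x, x ∈ U x) : ∃ S : Set X, #S ≤ aLdeg X ∧ ∀ y, ∃ x ∈ S, y ∈ closure (U x) := by
  obtain ⟨𝒱, h𝒱U, h𝒱, hcov⟩ := (aLdeg_spec X).2 (range U) (forall_mem_range.2 hU)
    (eq_univ_of_forall fun x => ⟨U x, mem_range_self x, hxU x⟩)
  choose c hc using fun V : 𝒱 => h𝒱U V.2
  refine ⟨range c, mk_range_le.trans h𝒱, fun y => ?_⟩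
  obtain ⟨V, hV, hyV⟩ := mem_iUnion₂.1 (hcov.symm ▸ mem_univ y)
  exact ⟨c ⟨V, hV⟩, mem_range_self _, (hc ⟨V, hV⟩).symm ▸ hyV⟩

lemma IsClosedNhdsCofinal.exists_card_le_aLdeg_cover (he : IsClosedNhdsCofinal e) {H : Set X}
    (hH : thetaCl H ⊆ H) {q : X} (hq : q ∉ H) :
    ∃ S ⊆ H, #S ≤ aLdeg X ∧ ∃ w : S → ι, (∀ x : S, q ∉ e x (w x)) ∧ H ⊆ ⋃ x : S, e x (w x) := by
  classical
  have hsep : ∀ z ∉ H, ∃ G, IsOpen G ∧ z ∈ G ∧ Disjoint (closure G) H :=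
    fun z hz => notMem_thetaCl_iff.1 fun h => hz (hH h)
  choose! G hG hzG hGH using hsep
  have hmiss : ∀ x ∈ H, ∃ i, q ∉ e x i := by
    intro x hx
    obtain ⟨i, hi⟩ := he.exists_subset_closure (isClosed_closure (s := G q)).isOpen_compl
      fun hxG => (hGH q hq).notMem_of_mem_left hxG hx
    refine ⟨i, fun hqi => ?_⟩
    have hq' := hi hqi
    rw [closure_compl] at hq'
    exact hq' (interior_maximal subset_closure (hG q hq) (hzG q hq))
  choose w hw using hmiss
  let U x := if hx : x ∈ H then interior (e x (w x hx)) else G x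
  obtain ⟨S, hS, hcov⟩ := exists_card_le_aLdeg_forall_mem_closure (U := U)
    (fun x => by by_cases hx : x ∈ H <;> simp [U, hx, hG])
    (fun x => by by_cases hx : x ∈ H <;> simp [U, hx, hzG, mem_interior_iff_mem_nhds, he.mem_nhds])
  refine ⟨S ∩ H, inter_subset_right, (mk_le_mk_of_subset inter_subset_left).trans hS,
    fun x => w x x.2.2, fun x => hw x x.2.2, fun y hy => ?_⟩
  obtain ⟨x, hxS, hyx⟩ := hcov y
  by_cases hx : x ∈ H
  · simp only [U, hx, dif_pos] at hyx
    exact mem_iUnion.2 ⟨⟨x, hxS, hx⟩,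
      (he.isClosed x (w x hx)).closure_subset_iff.2 interior_subset hyx⟩
  · simp only [U, hx, dif_neg, not_false_eq_true] at hyx
    exact absurd hy ((hGH x hx).notMem_of_mem_left hyx)

lemma IsClosedNhdsCofinal.eq_univ [Nonempty X] (he : IsClosedNhdsCofinal e) {H : Set X}
    (hθ : ∀ S ⊆ H, #S ≤ #ι → thetaCl S ⊆ H)
    (hesc : ∀ S ⊆ H, #S ≤ aLdeg X → escapePoints e S ⊆ H) : H = Set.univ := by
  have hH : thetaCl H ⊆ H := fun z hz => by
    obtain ⟨S, hSH, hS, hzS⟩ := he.exists_subset_card_le_mem_thetaCl hz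
    exact hθ S hSH hS hzS
  by_contra hne
  obtain ⟨q, hq⟩ := (ne_univ_iff_exists_notMem H).1 hne
  obtain ⟨S, hSH, hS, w, hqw, hHw⟩ := he.exists_card_le_aLdeg_cover hH hq
  have hp := Classical.epsilon_spec (p := fun p => ∀ x : S, p ∉ e x (w x)) ⟨q, hqw⟩
  obtain ⟨x, hx⟩ := mem_iUnion.1 (hHw (hesc S hSH hS ⟨w, rfl⟩))
  exact hp x hx

end Covering

section Counting

variable [TopologicalSpace X] [Nonempty X] {ι : Type u} {e : X → ι → Set X} {κ : Cardinal.{u}}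

lemma aleph0_le_nuNumber_pow (hκ : ℵ₀ ≤ κ) : ℵ₀ ≤ nuNumber X ^ κ :=
  hκ.trans <| (cantor κ).le.trans (power_le_power_right two_le_nuNumber)

lemma IsClosedNhdsCofinal.card_thetaCl_union_escapePoints_le [Infinite ι]
    (he : IsClosedNhdsCofinal e) (hκ : ℵ₀ ≤ κ) (hι : #ι ≤ κ) {S : Set X} (hS : #S ≤ κ) :
    #(thetaCl S ∪ escapePoints e S : Set X) ≤ nuNumber X ^ κ := by
  have hμ := aleph0_le_nuNumber_pow (X := X) hκ
  have hκκ : κ ^ κ ≤ nuNumber X ^ κ :=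
    (power_self_eq hκ).trans_le (power_le_power_right two_le_nuNumber)
  have hκ0 : κ ≠ 0 := (aleph0_pos.trans_le hκ).ne'
  refine (mk_union_le _ _).trans <| add_le_of_le hμ ?_ <|
    (card_escapePoints_le e S).trans ((power_le_power_self_of_le hι hS hκ0).trans hκκ)
  calc #(thetaCl S) ≤ #S ^ #ι * nuNumber X := he.card_thetaCl_le S
    _ ≤ nuNumber X ^ κ * nuNumber X ^ κ :=
      mul_le_mul' ((power_le_power_self_of_le hS hι hκ0).trans hκκ)
        (self_le_power _ (one_le_aleph0.trans hκ))
    _ = nuNumber X ^ κ := mul_eq_self hμ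

end Counting

theorem statement11 (X : Type u) [TopologicalSpace X] :
    #X ≤ nuNumber X ^ (kappaInv X * aLdeg X) := by
  rcases isEmpty_or_nonempty X with hX | hX
  · simp
  obtain ⟨e, he⟩ := exists_isClosedNhdsCofinal_kappaInv X
  have hκι : ℵ₀ ≤ #(kappaInv X).out := (kappaInv_spec X).1.trans_eq (mk_out _).symm
  have : Infinite (kappaInv X).out := infinite_iff.2 hκι
  have hικ : #(kappaInv X).out ≤ kappaInv X * aLdeg X :=
    (mk_out _).trans_le (le_mul_of_one_le_right' (one_le_aleph0.trans (aLdeg_spec X).1))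
  have haκ : aLdeg X ≤ kappaInv X * aLdeg X :=
    le_mul_of_one_le_left' (one_le_aleph0.trans (kappaInv_spec X).1)
  have hκ : ℵ₀ ≤ kappaInv X * aLdeg X := hκι.trans hικ
  obtain ⟨H, hHμ, hH⟩ := exists_card_le_forall_subset_card_le_subset hκ
    (aleph0_le_nuNumber_pow hκ) (power_power_self_of_aleph0_le hκ).le
    fun S hS => he.card_thetaCl_union_escapePoints_le hκ hικ hS
  have hHX : H = Set.univ :=
    he.eq_univ (fun S hSH hS => subset_union_left.trans (hH S hSH (hS.trans hικ)))
      fun S hSH hS => subset_union_right.trans (hH S hSH (hS.trans haκ))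
  rwa [← mk_univ, ← hHX]
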